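/- Converse duality for the Lagrange-type dual: if (λ̄, z̄, v̄) ∈ ℬ^L = {(λ, z, v) ∈ K*⁰ × ℝ^m × ℝ^k : λᵀv − zᵀb ≤ 0, Lᵀλ − Aᵀz ∈ ℝ^n_+} is an efficient (maximal) solution to maximizing v over ℬ^L with respect to K, then there exists x̄ ∈ 𝒜 = {x ∈ ℝ^n_+ : Ax = b}, efficient for minimizing Lx over 𝒜 with respect to K, such that Lx̄ = v̄. -/

import Mathlib

/-!
Strict positivity on `K ∖ {0}` is an open condition on `λ` when `K` is a closed cone, by
compactness of `K ∩ sphere 0 1`. Maximality of `v̄` forces `zᵀb ≤ λᵀv̄` for every dual-feasible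
`(λ, z)` with `λ ∈ K*⁰`: otherwise `v̄` could be pushed along a nonzero direction of `K`. If the
system `x ≥ 0, Ax = b, Lx = v̄` had no solution, Farkas' lemma would give a direction along which
a small perturbation of `(λ̄, z̄)` stays dual-feasible but violates that inequality. A solution
`x̄` is efficient by weak duality: `λ̄ᵀLx̄ = λ̄ᵀv̄ ≤ z̄ᵀb ≤ λ̄ᵀLx` for every feasible `x`.
Farkas' lemma itself comes from the separation theorem for closed cones, and closedness of a
finitely generated cone from the conic Carathéodory theorem.
-/

open Matrix Filter Topology

section

variable {ι E : Type*} [Fintype ι] [AddCommGroup E] [Module ℝ E]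

lemma exists_pos_of_not_linearIndepOn {a : ι → E} {s : Finset ι}
    (hs : ¬ LinearIndepOn ℝ a (s : Set ι)) :
    ∃ c : ι → ℝ, (∀ i ∉ s, c i = 0) ∧ ∑ i, c i • a i = 0 ∧ ∃ i ∈ s, 0 < c i := by
  classical
  obtain ⟨c, hc, i₁, hi₁, hci₁⟩ := not_linearIndepOn_finset_iff.mp hs
  wlog hpos : 0 < c i₁ generalizing c
  · refine this (-c) ?_ (by simpa using hci₁) (neg_pos.mpr ((not_lt.mp hpos).lt_of_ne hci₁))
    simp [Finset.sum_neg_distrib, hc]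
  refine ⟨fun i => if i ∈ s then c i else 0, fun i hi => if_neg hi, ?_, i₁, hi₁, by simpa [hi₁]⟩
  simpa [ite_smul, Finset.sum_ite_mem] using hc

lemma exists_nonneg_sum_smul_eq_of_not_linearIndepOn [DecidableEq ι] {a : ι → E} {s : Finset ι}
    {x : ι → ℝ} (hx : 0 ≤ x) (hxs : ∀ i ∉ s, x i = 0) (hs : ¬ LinearIndepOn ℝ a (s : Set ι)) :
    ∃ i₀ ∈ s, ∃ x' : ι → ℝ, 0 ≤ x' ∧ (∀ i ∉ s.erase i₀, x' i = 0) ∧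
      ∑ i, x' i • a i = ∑ i, x i • a i := by
  obtain ⟨c, hcs, hc, i₁, hi₁, hci₁⟩ := exists_pos_of_not_linearIndepOn hs
  -- With `ρ = min {x i / c i | 0 < c i}`, attained at `i₀`, `x - ρ • c` is still nonnegative.
  obtain ⟨i₀, hi₀, hmin⟩ := (s.filter (0 < c ·)).exists_min_image (fun i => x i / c i)
    ⟨i₁, Finset.mem_filter.mpr ⟨hi₁, hci₁⟩⟩
  rw [Finset.mem_filter] at hi₀
  set ρ := x i₀ / c i₀
  have hρ : 0 ≤ ρ := div_nonneg (hx i₀) hi₀.2.le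
  refine ⟨i₀, hi₀.1, x - ρ • c, fun i => ?_, fun i hi => ?_, ?_⟩
  · rcases le_or_gt (c i) 0 with hci | hci
    · simp only [Pi.zero_apply, Pi.sub_apply, Pi.smul_apply, smul_eq_mul]
      have : 0 ≤ x i := hx i
      nlinarith [mul_nonpos_of_nonneg_of_nonpos hρ hci]
    · have hi : i ∈ s := by by_contra h; simp [hcs i h] at hci
      have := hmin i (Finset.mem_filter.mpr ⟨hi, hci⟩)
      rw [le_div_iff₀ hci] at this
      simpa using this
  · rcases eq_or_ne i i₀ with rfl | hne
    · simp [ρ, div_mul_cancel₀ _ hi₀.2.ne']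
    · have hi' : i ∉ s := fun h => hi (Finset.mem_erase.mpr ⟨hne, h⟩)
      simp [hxs i hi', hcs i hi']
  · simp [sub_smul, Finset.sum_sub_distrib, mul_smul, ← Finset.smul_sum, hc]

theorem exists_linearIndepOn_nonneg_sum_smul_eq (a : ι → E) {x : ι → ℝ} (hx : 0 ≤ x) :
    ∃ s : Finset ι, LinearIndepOn ℝ a (s : Set ι) ∧ ∃ y : ι → ℝ, 0 ≤ y ∧ (∀ i ∉ s, y i = 0) ∧
      ∑ i, y i • a i = ∑ i, x i • a i := by
  suffices ∀ s : Finset ι, ∀ x : ι → ℝ, 0 ≤ x → (∀ i ∉ s, x i = 0) →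
      ∃ t : Finset ι, LinearIndepOn ℝ a (t : Set ι) ∧ ∃ y : ι → ℝ, 0 ≤ y ∧ (∀ i ∉ t, y i = 0) ∧
        ∑ i, y i • a i = ∑ i, x i • a i from
    this Finset.univ x hx (by simp)
  classical
  intro s
  induction s using Finset.strongInduction with
  | H s ih =>
    intro x hx hxs
    by_cases hs : LinearIndepOn ℝ a (s : Set ι)
    · exact ⟨s, hs, x, hx, hxs, rfl⟩
    obtain ⟨i₀, hi₀, x', hx', hx's, hsum⟩ :=
      exists_nonneg_sum_smul_eq_of_not_linearIndepOn hx hxs hs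
    obtain ⟨t, ht, y, hy, hyt, hsum'⟩ := ih _ (Finset.erase_ssubset hi₀) x' hx' hx's
    exact ⟨t, ht, y, hy, hyt, hsum'.trans hsum⟩

lemma LinearMap.apply_eq_sum_smul_single [DecidableEq ι] (f : (ι → ℝ) →ₗ[ℝ] E) (x : ι → ℝ) :
    f x = ∑ i, x i • f (Pi.single i 1) := by
  conv_lhs => rw [← Finset.univ_sum_single x]
  simp only [map_sum, ← map_smul, ← Pi.single_smul', smul_eq_mul, mul_one]

variable [TopologicalSpace E] [IsTopologicalAddGroup E] [ContinuousSMul ℝ E] [T2Space E]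

theorem LinearMap.isClosed_image_nonneg (f : (ι → ℝ) →ₗ[ℝ] E) :
    IsClosed (f '' {x | 0 ≤ x}) := by
  classical
  set a : ι → E := fun i => f (Pi.single i 1)
  have hunion : f '' {x | 0 ≤ x} = ⋃ (s : Finset ι) (_ : LinearIndepOn ℝ a (s : Set ι)),
      Fintype.linearCombination ℝ (fun i : (s : Set ι) => a i) '' {y | 0 ≤ y} := by
    ext v
    simp only [Set.mem_image, Set.mem_iUnion, Set.mem_ofPred_eq, Fintype.linearCombination_apply]
    constructor
    · rintro ⟨x, hx, rfl⟩
      obtain ⟨s, hs, y, hy, hys, hsum⟩ := exists_linearIndepOn_nonneg_sum_smul_eq a hx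
      refine ⟨s, hs, fun i => y i, fun i => hy i, ?_⟩
      rw [f.apply_eq_sum_smul_single, ← hsum, Finset.sum_finset_coe (fun i => y i • a i)]
      exact Finset.sum_subset s.subset_univ fun i _ hi => by rw [hys i hi, zero_smul]
    · rintro ⟨s, -, y, hy, rfl⟩
      refine ⟨fun i => if h : i ∈ s then y ⟨i, h⟩ else 0, fun i => ?_, ?_⟩
      · dsimp only
        split_ifs
        exacts [hy _, le_rfl]
      · rw [f.apply_eq_sum_smul_single, ← Finset.sum_subset s.subset_univ fun i _ hi => by
          rw [dif_neg hi, zero_smul], ← Finset.sum_finset_coe]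
        exact Finset.sum_congr rfl fun i _ => by simp [a]
  rw [hunion]
  refine isClosed_iUnion_of_finite fun s => isClosed_iUnion_of_finite fun hs => ?_
  have hinj := linearIndependent_iff_injective_fintypeLinearCombination.mp hs
  exact (LinearMap.isClosedEmbedding_of_injective (LinearMap.ker_eq_bot.mpr hinj)).isClosedMap _
    (isClosed_le continuous_const continuous_id)

theorem Matrix.farkas {D : Type*} [Fintype D] (M : Matrix D ι ℝ) {c : D → ℝ}
    (hc : ∀ x, 0 ≤ x → M *ᵥ x ≠ c) : ∃ y, 0 ≤ Mᵀ *ᵥ y ∧ c ⬝ᵥ y < 0 := by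
  classical
  let C : ProperCone ℝ (D → ℝ) :=
    ⟨(PointedCone.positive ℝ (ι → ℝ)).map M.mulVecLin, M.mulVecLin.isClosed_image_nonneg⟩
  obtain ⟨φ, hφC, hφc⟩ := C.hyperplane_separation_point (x₀ := c) fun ⟨x, hx, hxc⟩ => hc x hx hxc
  set y : D → ℝ := fun j => φ (Pi.single j 1)
  have hφ (v : D → ℝ) : φ v = v ⬝ᵥ y :=
    (φ.toLinearMap.apply_eq_sum_smul_single v).trans (by simp [dotProduct, y])
  refine ⟨y, fun i => ?_, by rwa [← hφ]⟩
  have := hφC (M *ᵥ Pi.single i 1) ⟨_, Pi.single_nonneg.mpr zero_le_one, rfl⟩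
  simpa [hφ, dotProduct_comm _ y, mulVec, dotProduct, mul_comm] using this

/-- The set `K*⁰` of the paper; for a closed cone `K` it is the quasi-interior of the dual cone. -/
def dualQuasiInterior (K : Set (ι → ℝ)) : Set (ι → ℝ) := {l | ∀ u ∈ K, u ≠ 0 → 0 < l ⬝ᵥ u}

theorem isOpen_dualQuasiInterior {K : Set (ι → ℝ)}
    (hKcone : ∀ c : ℝ, 0 ≤ c → ∀ u ∈ K, c • u ∈ K) (hK : IsClosed K) :
    IsOpen (dualQuasiInterior K) := by
  refine isOpen_iff_eventually.mpr fun l hl => ?_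
  have hS : IsCompact (K ∩ Metric.sphere 0 1) := (isCompact_sphere 0 1).inter_left hK
  have hpos : ∀ u ∈ K ∩ Metric.sphere 0 1, 0 < l ⬝ᵥ u := fun u hu =>
    hl u hu.1 (ne_zero_of_mem_unit_sphere ⟨u, hu.2⟩)
  have : ∀ᶠ l' in 𝓝 l, ∀ u ∈ K ∩ Metric.sphere 0 1, 0 < l' ⬝ᵥ u :=
    hS.eventually_forall_of_forall_eventually fun u hu =>
      continuousAt_const.eventually_lt (continuous_fst.dotProduct continuous_snd).continuousAt
        (hpos u hu)
  filter_upwards [this] with l' hl' u hu hu0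
  have hn : 0 < ‖u‖ := norm_pos_iff.mpr hu0
  have := hl' (‖u‖⁻¹ • u) ⟨hKcone _ (inv_nonneg.mpr hn.le) u hu, by simp [norm_smul, hn.ne']⟩
  rw [dotProduct_smul, smul_eq_mul] at this
  exact pos_of_mul_pos_right this (inv_nonneg.mpr hn.le)

end

namespace LagrangeDual

variable {k m n : Type*} [Fintype k] [Fintype m]

/-- Membership of `(l, z, v)` in the feasible set `ℬ^L` of the Lagrange-type dual. -/
def IsFeasible (K : Set (k → ℝ)) (L : Matrix k n ℝ) (A : Matrix m n ℝ) (b : m → ℝ)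
    (l : k → ℝ) (z : m → ℝ) (v : k → ℝ) : Prop :=
  l ∈ dualQuasiInterior K ∧ l ⬝ᵥ v - z ⬝ᵥ b ≤ 0 ∧ 0 ≤ Lᵀ *ᵥ l - Aᵀ *ᵥ z

variable {L : Matrix k n ℝ} {A : Matrix m n ℝ} {b : m → ℝ}

theorem weak_duality [Fintype n] {x : n → ℝ} {l : k → ℝ} {z : m → ℝ} (hx : 0 ≤ x)
    (hAx : A *ᵥ x = b) (hlz : 0 ≤ Lᵀ *ᵥ l - Aᵀ *ᵥ z) : z ⬝ᵥ b ≤ l ⬝ᵥ (L *ᵥ x) := by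
  have := dotProduct_nonneg_of_nonneg hlz hx
  rwa [sub_dotProduct, mulVec_transpose, mulVec_transpose, ← dotProduct_mulVec,
    ← dotProduct_mulVec, hAx, sub_nonneg] at this

theorem le_dotProduct_of_maximal {K : Set (k → ℝ)}
    (hKcone : ∀ c : ℝ, 0 ≤ c → ∀ u ∈ K, c • u ∈ K) (hK : ∃ u ∈ K, u ≠ 0) {vbar : k → ℝ}
    (hmax : ¬ ∃ l z v, IsFeasible K L A b l z v ∧ v - vbar ∈ K ∧ v - vbar ≠ 0)
    {l : k → ℝ} {z : m → ℝ} (hl : l ∈ dualQuasiInterior K) (hlz : 0 ≤ Lᵀ *ᵥ l - Aᵀ *ᵥ z) :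
    z ⬝ᵥ b ≤ l ⬝ᵥ vbar := by
  by_contra! hlt
  obtain ⟨u, hu, hu0⟩ := hK
  have hlu : 0 < l ⬝ᵥ u := hl u hu hu0
  -- `ε` makes `vbar + ε • u` feasible with zero duality gap.
  set ε := (z ⬝ᵥ b - l ⬝ᵥ vbar) / (l ⬝ᵥ u)
  have hε : 0 < ε := div_pos (sub_pos.mpr hlt) hlu
  refine hmax ⟨l, z, vbar + ε • u, ⟨hl, ?_, hlz⟩, ?_, ?_⟩
  · rw [dotProduct_add, dotProduct_smul, smul_eq_mul, div_mul_cancel₀ _ hlu.ne']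
    linarith
  · simpa using hKcone ε hε.le u hu
  · simpa using ⟨hε.ne', hu0⟩

theorem exists_nonneg_mulVec_eq_of_forall_le [Fintype n] {U : Set (k → ℝ)} (hU : IsOpen U)
    {lbar : k → ℝ} {zbar : m → ℝ} {vbar : k → ℝ} (hlbar : lbar ∈ U)
    (hdual : 0 ≤ Lᵀ *ᵥ lbar - Aᵀ *ᵥ zbar) (hgap : lbar ⬝ᵥ vbar ≤ zbar ⬝ᵥ b)
    (hle : ∀ l ∈ U, ∀ z, 0 ≤ Lᵀ *ᵥ l - Aᵀ *ᵥ z → z ⬝ᵥ b ≤ l ⬝ᵥ vbar) :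
    ∃ x, 0 ≤ x ∧ A *ᵥ x = b ∧ L *ᵥ x = vbar := by
  by_contra! h
  obtain ⟨y, hy, hyc⟩ := (fromRows A L).farkas (c := Sum.elim b vbar) fun x hx hxc => by
    rw [fromRows_mulVec] at hxc
    exact h x hx (funext fun i => congrFun hxc (.inl i)) (funext fun i => congrFun hxc (.inr i))
  rw [← Sum.elim_comp_inl_inr y, transpose_fromRows, fromCols_mulVec_sumElim] at hy
  rw [← Sum.elim_comp_inl_inr y, sumElim_dotProduct_sumElim] at hyc
  set y₁ := y ∘ Sum.inl
  set y₂ := y ∘ Sum.inr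
  have hnear : ∀ᶠ t in 𝓝[>] (0 : ℝ), lbar + t • y₂ ∈ U := by
    have : Tendsto (fun t : ℝ => lbar + t • y₂) (𝓝 0) (𝓝 lbar) := by
      simpa using tendsto_const_nhds.add ((tendsto_id (x := 𝓝 (0 : ℝ))).smul_const y₂)
    exact (this.mono_left nhdsWithin_le_nhds).eventually (hU.mem_nhds hlbar)
  obtain ⟨t, htU, ht⟩ := (hnear.and self_mem_nhdsWithin).exists
  have := hle _ htU (zbar - t • y₁) ?_
  · rw [sub_dotProduct, add_dotProduct, smul_dotProduct, smul_dotProduct, smul_eq_mul,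
      smul_eq_mul, dotProduct_comm y₁, dotProduct_comm y₂] at this
    nlinarith [mul_neg_of_pos_of_neg ht hyc]
  · have : Lᵀ *ᵥ (lbar + t • y₂) - Aᵀ *ᵥ (zbar - t • y₁) =
        (Lᵀ *ᵥ lbar - Aᵀ *ᵥ zbar) + t • (Aᵀ *ᵥ y₁ + Lᵀ *ᵥ y₂) := by
      simp only [mulVec_add, mulVec_sub, mulVec_smul, smul_add]
      abel
    rw [this]
    exact add_nonneg hdual (smul_nonneg ht.le hy)

end LagrangeDual

theorem stmt12_general (k n m : ℕ) (K : Set (Fin k → ℝ))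
    (hKcone : ∀ (c : ℝ), 0 ≤ c → ∀ x ∈ K, c • x ∈ K)
    (hKclosed : IsClosed K)
    (hKpointed : K ∩ (-K) = {0})
    (hKne : K ≠ {0})
    (L : Matrix (Fin k) (Fin n) ℝ) (A : Matrix (Fin m) (Fin n) ℝ) (b : Fin m → ℝ)
    (lbar : Fin k → ℝ) (zbar : Fin m → ℝ) (vbar : Fin k → ℝ)
    (hfeas : (∀ u ∈ K, u ≠ 0 → 0 < lbar ⬝ᵥ u) ∧ lbar ⬝ᵥ vbar - zbar ⬝ᵥ b ≤ 0 ∧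
      ∀ i, 0 ≤ (Lᵀ *ᵥ lbar - Aᵀ *ᵥ zbar) i)
    (hmax : ¬ ∃ (l : Fin k → ℝ) (z : Fin m → ℝ) (v : Fin k → ℝ),
      ((∀ u ∈ K, u ≠ 0 → 0 < l ⬝ᵥ u) ∧ l ⬝ᵥ v - z ⬝ᵥ b ≤ 0 ∧
        ∀ i, 0 ≤ (Lᵀ *ᵥ l - Aᵀ *ᵥ z) i) ∧
      v - vbar ∈ K ∧ v - vbar ≠ 0) :
    ∃ xbar : Fin n → ℝ, ((∀ i, 0 ≤ xbar i) ∧ A *ᵥ xbar = b) ∧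
      (¬ ∃ x : Fin n → ℝ, ((∀ i, 0 ≤ x i) ∧ A *ᵥ x = b) ∧
        L *ᵥ xbar - L *ᵥ x ∈ K ∧ L *ᵥ xbar - L *ᵥ x ≠ 0) ∧
      L *ᵥ xbar = vbar := by
  obtain ⟨hl, hgap, hdual⟩ := hfeas
  have h0 : (0 : Fin k → ℝ) ∈ K := (hKpointed.ge (Set.mem_singleton 0)).1
  obtain ⟨xbar, hx, hAx, hLx⟩ := LagrangeDual.exists_nonneg_mulVec_eq_of_forall_le
    (isOpen_dualQuasiInterior hKcone hKclosed) hl hdual (sub_nonpos.mp hgap)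
    fun l hl z hlz => LagrangeDual.le_dotProduct_of_maximal hKcone
      (((Set.nontrivial_iff_ne_singleton h0).mpr hKne).exists_ne 0) hmax hl hlz
  refine ⟨xbar, ⟨hx, hAx⟩, ?_, hLx⟩
  rintro ⟨x, ⟨hx', hAx'⟩, hxK, hx0⟩
  have hpos := hl _ hxK hx0
  have hweak := LagrangeDual.weak_duality hx' hAx' hdual
  rw [dotProduct_sub, hLx] at hpos
  linarith

theorem stmt12 (k n m : ℕ) (K : Set (Fin k → ℝ))
    (hKcone : ∀ (c : ℝ), 0 ≤ c → ∀ x ∈ K, c • x ∈ K)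
    (hKclosed : IsClosed K) (hKconvex : Convex ℝ K)
    (hKpointed : K ∩ (-K) = {0})
    (hKne : K ≠ {0}) (hKuniv : K ≠ Set.univ)
    (L : Matrix (Fin k) (Fin n) ℝ) (A : Matrix (Fin m) (Fin n) ℝ) (b : Fin m → ℝ)
    (lbar : Fin k → ℝ) (zbar : Fin m → ℝ) (vbar : Fin k → ℝ)
    (hfeas : (∀ u ∈ K, u ≠ 0 → 0 < lbar ⬝ᵥ u) ∧ lbar ⬝ᵥ vbar - zbar ⬝ᵥ b ≤ 0 ∧
      ∀ i, 0 ≤ (Lᵀ *ᵥ lbar - Aᵀ *ᵥ zbar) i)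
    (hmax : ¬ ∃ (l : Fin k → ℝ) (z : Fin m → ℝ) (v : Fin k → ℝ),
      ((∀ u ∈ K, u ≠ 0 → 0 < l ⬝ᵥ u) ∧ l ⬝ᵥ v - z ⬝ᵥ b ≤ 0 ∧
        ∀ i, 0 ≤ (Lᵀ *ᵥ l - Aᵀ *ᵥ z) i) ∧
      v - vbar ∈ K ∧ v - vbar ≠ 0) :
    ∃ xbar : Fin n → ℝ, ((∀ i, 0 ≤ xbar i) ∧ A *ᵥ xbar = b) ∧
      (¬ ∃ x : Fin n → ℝ, ((∀ i, 0 ≤ x i) ∧ A *ᵥ x = b) ∧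
        L *ᵥ xbar - L *ᵥ x ∈ K ∧ L *ᵥ xbar - L *ᵥ x ≠ 0) ∧
      L *ᵥ xbar = vbar :=
  stmt12_general k n m K hKcone hKclosed hKpointed hKne L A b lbar zbar vbar hfeas hmax
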